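/- arXiv:2210.03164 — 2 statements merged into one kernel-verified Lean document; each statement's English description precedes it below -/
import Mathlib

section
/- Let (X, d_X) and (Y, d_Y) be metric spaces, let x_1, …, x_n ∈ X be pairwise distinct and y_1, …, y_m ∈ Y be pairwise distinct, and let Γ ∈ ℝ^{n×m} have nonnegative entries with Σ_{i,j} Γ_{ij} = 1. Then, as h → 0⁺, the kernelized mutual information Î_Γ(X,Y) computed with the Gaussian kernel K_h converges to −H(Γ) + log(nm). -/
open Filter Real

/-- Gaussian kernel with bandwidth `h` and fixed `σ` (normalizing constant omitted,
since it cancels in all ratios considered): `K_h(t) = exp(−t²/(2h²σ²))`. -/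
noncomputable def gaussK (σ h t : ℝ) : ℝ := Real.exp (-(t ^ 2) / (2 * h ^ 2 * σ ^ 2))

/-- Entropy `H(Γ) = −Σ_{i,j} Γ_{ij} log Γ_{ij}` (the convention `0·log 0 = 0` holds
automatically in Lean). -/
noncomputable def matEntropy {n m : ℕ} (Γ : Matrix (Fin n) (Fin m) ℝ) : ℝ :=
  -(∑ i, ∑ j, Γ i j * Real.log (Γ i j))

open Topology

/-!
As `h → 0⁺` the Gaussian kernel `K_h(d(x_i, x_k))` tends to `1` if `i = k` and to `0`
otherwise, because the points are distinct. Hence the smoothed plan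
`Σ_{k,l} Γ_{kl} K_h K_h` tends to `Γ_{ij}` and both normalizers tend to `1`, so every summand
with `Γ_{ij} ≠ 0` tends to `Γ_{ij} log (nm Γ_{ij})`; summing these gives `−H(Γ) + log (nm)`.
-/

lemma gaussK_zero (σ h : ℝ) : gaussK σ h 0 = 1 := by
  simp [gaussK]

lemma tendsto_gaussK_nhdsGT_zero {σ t : ℝ} (hσ : σ ≠ 0) (ht : t ≠ 0) :
    Tendsto (fun h => gaussK σ h t) (𝓝[>] 0) (𝓝 0) := by
  have hsq : Tendsto (fun h : ℝ => h ^ 2) (𝓝[>] 0) (𝓝[>] 0) :=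
    tendsto_nhdsWithin_of_tendsto_nhds_of_eventually_within _
      (((continuous_pow 2).tendsto' 0 0 (zero_pow two_ne_zero)).mono_left nhdsWithin_le_nhds)
      (eventually_nhdsWithin_of_forall fun h (hh : 0 < h) => pow_pos hh 2)
  have hexponent : Tendsto (fun h : ℝ => -(t ^ 2) / (2 * h ^ 2 * σ ^ 2)) (𝓝[>] 0) atBot := by
    have hinv := (tendsto_inv_nhdsGT_zero.comp hsq).const_mul_atTop
      (show 0 < t ^ 2 / (2 * σ ^ 2) by positivity)
    refine (tendsto_neg_atTop_atBot.comp hinv).congr fun h => ?_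
    simp only [Function.comp, div_eq_mul_inv, mul_inv]
    ring
  exact tendsto_exp_atBot.comp hexponent

section DistinctPoints

variable {ι M : Type*} [MetricSpace M] {σ : ℝ} {p : ι → M}

lemma tendsto_gaussK_dist [DecidableEq ι] (hσ : σ ≠ 0) (hp : Function.Injective p) (i k : ι) :
    Tendsto (fun h => gaussK σ h (dist (p i) (p k))) (𝓝[>] 0)
      (𝓝 (if i = k then 1 else 0)) := by
  by_cases hik : i = k
  · simp only [hik, dist_self, gaussK_zero]
    exact tendsto_const_nhds
  · rw [if_neg hik]
    exact tendsto_gaussK_nhdsGT_zero hσ (dist_ne_zero.2 (hp.ne hik))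

lemma tendsto_sum_gaussK_dist [Fintype ι] (hσ : σ ≠ 0) (hp : Function.Injective p) (i : ι) :
    Tendsto (fun h => ∑ k, gaussK σ h (dist (p i) (p k))) (𝓝[>] 0) (𝓝 1) := by
  classical
  simpa using tendsto_finsetSum Finset.univ fun k _ => tendsto_gaussK_dist hσ hp i k

end DistinctPoints

lemma tendsto_sum_sum_mul_gaussK_dist {ι κ X Y : Type*} [Fintype ι] [Fintype κ]
    [MetricSpace X] [MetricSpace Y] {σ : ℝ} {x : ι → X} {y : κ → Y} (hσ : σ ≠ 0)
    (hx : Function.Injective x) (hy : Function.Injective y) (Γ : ι → κ → ℝ) (i : ι) (j : κ) :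
    Tendsto (fun h => ∑ k, ∑ l,
        Γ k l * gaussK σ h (dist (x i) (x k)) * gaussK σ h (dist (y j) (y l)))
      (𝓝[>] 0) (𝓝 (Γ i j)) := by
  classical
  simpa using tendsto_finsetSum Finset.univ fun k _ => tendsto_finsetSum Finset.univ fun l _ =>
    ((tendsto_gaussK_dist hσ hx i k).const_mul (Γ k l)).mul (tendsto_gaussK_dist hσ hy j l)

lemma tendsto_ite_mul_log_div {α : Type*} {f : Filter α} {a c : ℝ} {B A A' : α → ℝ}
    (hc : c ≠ 0) (hB : Tendsto B f (𝓝 a)) (hA : Tendsto A f (𝓝 1)) (hA' : Tendsto A' f (𝓝 1)) :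
    Tendsto (fun h => if a = 0 then 0 else a * log (c * B h / (A h * A' h))) f
      (𝓝 (if a = 0 then 0 else a * log (c * a))) := by
  by_cases ha : a = 0
  · simp only [ha, if_true]
    exact tendsto_const_nhds
  · simp only [ha, if_false]
    have hratio := (hB.const_mul c).div (hA.mul hA') (by norm_num)
    rw [mul_one, div_one] at hratio
    exact (hratio.log (mul_ne_zero hc ha)).const_mul a

lemma sum_ite_mul_log_const_mul {n m : ℕ} (Γ : Matrix (Fin n) (Fin m) ℝ) {c : ℝ} (hc : c ≠ 0) :
    ∑ i, ∑ j, (if Γ i j = 0 then 0 else Γ i j * log (c * Γ i j))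
      = -matEntropy Γ + log c * ∑ i, ∑ j, Γ i j := by
  have hsplit : ∀ i j, (if Γ i j = 0 then 0 else Γ i j * log (c * Γ i j))
      = Γ i j * log (Γ i j) + log c * Γ i j := by
    intro i j
    by_cases hij : Γ i j = 0
    · simp [hij]
    · rw [if_neg hij, log_mul hc hij]
      ring
  simp only [hsplit, Finset.sum_add_distrib, Finset.mul_sum, matEntropy, neg_neg]

theorem infoot_mi_tendsto_neg_entropy_general
    {X Y : Type*} [MetricSpace X] [MetricSpace Y] {n m : ℕ}
    (x : Fin n → X) (y : Fin m → Y)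
    (hx : Function.Injective x) (hy : Function.Injective y)
    (σ : ℝ) (hσ : 0 < σ)
    (Γ : Matrix (Fin n) (Fin m) ℝ)
    (hΓsum : ∑ i, ∑ j, Γ i j = 1) :
    Tendsto (fun h : ℝ =>
        ∑ i, ∑ j,
          if Γ i j = 0 then 0
          else Γ i j * Real.log (
            ((n : ℝ) * m *
              ∑ k, ∑ l, Γ k l * gaussK σ h (dist (x i) (x k)) * gaussK σ h (dist (y j) (y l))) /
            ((∑ k, gaussK σ h (dist (x i) (x k))) * (∑ l, gaussK σ h (dist (y j) (y l))))))
      (nhdsWithin 0 (Set.Ioi 0))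
      (nhds (-matEntropy Γ + Real.log ((n : ℝ) * m))) := by
  have hn : n ≠ 0 := by rintro rfl; simp at hΓsum
  have hm : m ≠ 0 := by rintro rfl; simp at hΓsum
  have hnm : (n : ℝ) * m ≠ 0 := by positivity
  have hlimit := sum_ite_mul_log_const_mul Γ hnm
  rw [hΓsum, mul_one] at hlimit
  rw [← hlimit]
  exact tendsto_finsetSum _ fun i _ => tendsto_finsetSum _ fun j _ =>
    tendsto_ite_mul_log_div hnm (tendsto_sum_sum_mul_gaussK_dist hσ.ne' hx hy Γ i j)
      (tendsto_sum_gaussK_dist hσ.ne' hx i) (tendsto_sum_gaussK_dist hσ.ne' hy j)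

/-- As `h → 0⁺`, the kernelized mutual information `Î_Γ(X,Y)` computed
with the Gaussian kernel converges to `−H(Γ) + log(nm)`. -/
theorem infoot_mi_tendsto_neg_entropy
    {X Y : Type*} [MetricSpace X] [MetricSpace Y] {n m : ℕ}
    (x : Fin n → X) (y : Fin m → Y)
    (hx : Function.Injective x) (hy : Function.Injective y)
    (σ : ℝ) (hσ : 0 < σ)
    (Γ : Matrix (Fin n) (Fin m) ℝ)
    (hΓ : ∀ i j, 0 ≤ Γ i j)
    (hΓsum : ∑ i, ∑ j, Γ i j = 1) :
    Tendsto (fun h : ℝ =>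
        ∑ i, ∑ j,
          if Γ i j = 0 then 0
          else Γ i j * Real.log (
            ((n : ℝ) * m *
              ∑ k, ∑ l, Γ k l * gaussK σ h (dist (x i) (x k)) * gaussK σ h (dist (y j) (y l))) /
            ((∑ k, gaussK σ h (dist (x i) (x k))) * (∑ l, gaussK σ h (dist (y j) (y l))))))
      (nhdsWithin 0 (Set.Ioi 0))
      (nhds (-matEntropy Γ + Real.log ((n : ℝ) * m))) :=
  infoot_mi_tendsto_neg_entropy_general x y hx hy σ hσ Γ hΓsum
end

section
/- Let (X, d_X) be a metric space with pairwise distinct points x_1, …, x_n, let y_1, …, y_m ∈ ℝ^d be pairwise distinct, and let Γ ∈ ℝ^{n×m} have nonnegative entries with Σ_j Γ_{ij} > 0 for a fixed index i. For h > 0 define the importance weights w_j(h) = f̂_Γ(x_i, y_j) / ( f̂_X(x_i) · f̂_Y(y_j) ), where f̂_Γ(x,y) = Σ_{k,l} Γ_{kl} K_h(d_X(x,x_k)) K_h(‖y−y_l‖), f̂_X(x) = (1/n) Σ_k K_h(d_X(x,x_k)), and f̂_Y(y) = (1/m) Σ_l K_h(‖y−y_l‖), with K_h the Gaussian kernel.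 Then, as h → 0⁺, the conditional projection ( Σ_j w_j(h) · y_j ) / ( Σ_j w_j(h) ) converges to the barycentric projection ( Σ_j Γ_{ij} · y_j ) / ( Σ_j Γ_{ij} ). -/
open Filter Real

lemma gaussK_tendsto (σ : ℝ) (hσ : 0 < σ) (t : ℝ) :
    Filter.Tendsto (fun h : ℝ => gaussK σ h t) (nhdsWithin 0 (Set.Ioi 0))
      (nhds (if t = 0 then 1 else 0)) := by
  rcases eq_or_ne t 0 with ht | ht
  · simp only [ht, if_pos rfl]
    have : (fun h : ℝ => gaussK σ h 0) = fun _ => (1 : ℝ) := by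
      funext h; simp [gaussK]
    rw [this]
    exact tendsto_const_nhds
  · simp only [if_neg ht]
    have h1 : Tendsto (fun h : ℝ => 2 * h ^ 2 * σ ^ 2) (nhdsWithin 0 (Set.Ioi 0))
        (nhdsWithin 0 (Set.Ioi 0)) := by
      apply tendsto_nhdsWithin_of_tendsto_nhds_of_eventually_within
      · have hc : Tendsto (fun h : ℝ => 2 * h ^ 2 * σ ^ 2) (nhds 0)
            (nhds (2 * (0:ℝ) ^ 2 * σ ^ 2)) :=
          ((continuous_const.mul (continuous_pow 2)).mul continuous_const).tendsto 0
        simpa using hc.mono_left nhdsWithin_le_nhds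
      · filter_upwards [self_mem_nhdsWithin] with h hh
        have : (0:ℝ) < h := hh
        show (0:ℝ) < 2 * h ^ 2 * σ ^ 2
        positivity
    have h2 : Tendsto (fun h : ℝ => (2 * h ^ 2 * σ ^ 2)⁻¹) (nhdsWithin 0 (Set.Ioi 0))
        atTop := tendsto_inv_nhdsGT_zero.comp h1
    have h3 : Tendsto (fun h : ℝ => t ^ 2 * (2 * h ^ 2 * σ ^ 2)⁻¹)
        (nhdsWithin 0 (Set.Ioi 0)) atTop := h2.const_mul_atTop (by positivity)
    have h4 : Tendsto (fun h : ℝ => -(t ^ 2) / (2 * h ^ 2 * σ ^ 2))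
        (nhdsWithin 0 (Set.Ioi 0)) atBot := by
      have heq : (fun h : ℝ => -(t ^ 2) / (2 * h ^ 2 * σ ^ 2))
          = fun h : ℝ => -(t ^ 2 * (2 * h ^ 2 * σ ^ 2)⁻¹) := by
        funext h; rw [neg_div, div_eq_mul_inv]
      rw [heq]
      exact tendsto_neg_atTop_atBot.comp h3
    exact Real.tendsto_exp_atBot.comp h4

/-- As `h → 0⁺`, the conditional projection
`(Σ_j w_j(h) · y_j) / (Σ_j w_j(h))` with importance weights
`w_j(h) = f̂_Γ(x_i, y_j) / (f̂_X(x_i) · f̂_Y(y_j))` converges to the barycentric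
projection `(Σ_j Γ_{ij} · y_j) / (Σ_j Γ_{ij})`. -/
theorem conditional_projection_tendsto_barycentric
    {X : Type*} [MetricSpace X] {n m d : ℕ}
    (x : Fin n → X) (y : Fin m → EuclideanSpace ℝ (Fin d))
    (hx : Function.Injective x) (hy : Function.Injective y)
    (σ : ℝ) (hσ : 0 < σ)
    (Γ : Matrix (Fin n) (Fin m) ℝ)
    (hΓ : ∀ i j, 0 ≤ Γ i j)
    (i : Fin n) (hrow : 0 < ∑ j, Γ i j)
    -- estimated joint density `f̂_Γ(x_i, y_j)`
    (fΓ : ℝ → Fin m → ℝ)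
    (hfΓ : ∀ h j, fΓ h j =
      ∑ k, ∑ l, Γ k l * gaussK σ h (dist (x i) (x k)) * gaussK σ h (‖y j - y l‖))
    -- estimated marginal densities `f̂_X(x_i)` and `f̂_Y(y_j)`
    (fX : ℝ → ℝ)
    (hfX : ∀ h, fX h = (1 / (n : ℝ)) * ∑ k, gaussK σ h (dist (x i) (x k)))
    (fY : ℝ → Fin m → ℝ)
    (hfY : ∀ h j, fY h j = (1 / (m : ℝ)) * ∑ l, gaussK σ h (‖y j - y l‖))
    -- importance weights `w_j(h)`
    (w : ℝ → Fin m → ℝ)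
    (hw : ∀ h j, w h j = fΓ h j / (fX h * fY h j)) :
    Tendsto (fun h : ℝ => (∑ j, w h j)⁻¹ • ∑ j, w h j • y j)
      (nhdsWithin 0 (Set.Ioi 0))
      (nhds ((∑ j, Γ i j)⁻¹ • ∑ j, Γ i j • y j)) := by
  have hn : (n : ℝ) ≠ 0 := by
    have : 0 < n := i.pos
    positivity
  have hm0 : m ≠ 0 := by
    rintro rfl
    simp at hrow
  have hm : (m : ℝ) ≠ 0 := Nat.cast_ne_zero.mpr hm0
  set L : Filter ℝ := nhdsWithin 0 (Set.Ioi 0)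
  -- limit of fΓ · j is Γ i j
  have hdistx : ∀ k, (dist (x i) (x k) = 0) ↔ (i = k) := fun k => by
    rw [dist_eq_zero]; exact ⟨fun h => hx h, fun h => by rw [h]⟩
  have hdisty : ∀ j l : Fin m, (‖y j - y l‖ = 0) ↔ (j = l) := fun j l => by
    rw [norm_sub_eq_zero_iff]; exact ⟨fun h => hy h, fun h => by rw [h]⟩
  have hfΓlim : ∀ j, Tendsto (fun h => fΓ h j) L (nhds (Γ i j)) := by
    intro j
    have : Tendsto (fun h => ∑ k, ∑ l,
        Γ k l * gaussK σ h (dist (x i) (x k)) * gaussK σ h (‖y j - y l‖)) L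
        (nhds (∑ k, ∑ l, Γ k l * (if dist (x i) (x k) = 0 then (1:ℝ) else 0)
          * (if ‖y j - y l‖ = 0 then (1:ℝ) else 0))) := by
      apply tendsto_finset_sum
      intro k _
      apply tendsto_finset_sum
      intro l _
      exact (((gaussK_tendsto σ hσ _).const_mul (Γ k l)).mul (gaussK_tendsto σ hσ _))
    have heq : (∑ k, ∑ l, Γ k l * (if dist (x i) (x k) = 0 then (1:ℝ) else 0)
        * (if ‖y j - y l‖ = 0 then (1:ℝ) else 0)) = Γ i j := by
      simp only [hdistx, hdisty]
      simp [mul_ite, Finset.sum_ite_eq, eq_comm]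
    rw [heq] at this
    simpa only [← hfΓ] using this
  -- limit of fX is 1/n
  have hfXlim : Tendsto fX L (nhds (1 / (n : ℝ))) := by
    have : Tendsto (fun h => (1 / (n : ℝ)) * ∑ k, gaussK σ h (dist (x i) (x k))) L
        (nhds ((1 / (n : ℝ)) * ∑ k, (if dist (x i) (x k) = 0 then (1:ℝ) else 0))) := by
      apply Tendsto.const_mul
      exact tendsto_finset_sum _ fun k _ => gaussK_tendsto σ hσ _
    have heq : (∑ k, (if dist (x i) (x k) = 0 then (1:ℝ) else 0)) = 1 := by
      simp only [hdistx]
      simp [Finset.sum_ite_eq, eq_comm]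
    rw [heq, mul_one] at this
    simpa only [← hfX] using this
  -- limit of fY · j is 1/m
  have hfYlim : ∀ j, Tendsto (fun h => fY h j) L (nhds (1 / (m : ℝ))) := by
    intro j
    have : Tendsto (fun h => (1 / (m : ℝ)) * ∑ l, gaussK σ h (‖y j - y l‖)) L
        (nhds ((1 / (m : ℝ)) * ∑ l, (if ‖y j - y l‖ = 0 then (1:ℝ) else 0))) := by
      apply Tendsto.const_mul
      exact tendsto_finset_sum _ fun l _ => gaussK_tendsto σ hσ _
    have heq : (∑ l, (if ‖y j - y l‖ = 0 then (1:ℝ) else 0)) = 1 := by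
      simp only [hdisty]
      simp [Finset.sum_ite_eq, eq_comm]
    rw [heq, mul_one] at this
    simpa only [← hfY] using this
  -- limit of w · j
  set c : ℝ := (1 / (n : ℝ)) * (1 / (m : ℝ)) with hc
  have hcne : c ≠ 0 := by
    simp [hc, hn, hm]
  have hwlim : ∀ j, Tendsto (fun h => w h j) L (nhds (Γ i j / c)) := by
    intro j
    have hT := (hfΓlim j).div ((hfXlim.mul (hfYlim j))) hcne
    have heq : (fun h => w h j) = fun h => fΓ h j / (fX h * fY h j) :=
      funext fun h => hw h j
    rw [heq]
    exact hT
  -- limit of sum of weights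
  have hsumlim : Tendsto (fun h => ∑ j, w h j) L (nhds (∑ j, Γ i j / c)) :=
    tendsto_finset_sum _ fun j _ => hwlim j
  have hS : (∑ j, Γ i j / c) = (∑ j, Γ i j) / c := by
    rw [Finset.sum_div]
  have hSne : (∑ j, Γ i j / c) ≠ 0 := by
    rw [hS]
    exact div_ne_zero (ne_of_gt hrow) hcne
  -- limit of vector sum
  have hveclim : Tendsto (fun h => ∑ j, w h j • y j) L
      (nhds (∑ j, (Γ i j / c) • y j)) :=
    tendsto_finset_sum _ fun j _ => (hwlim j).smul_const (y j)
  have hfinal : Tendsto (fun h : ℝ => (∑ j, w h j)⁻¹ • ∑ j, w h j • y j) L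
      (nhds ((∑ j, Γ i j / c)⁻¹ • ∑ j, (Γ i j / c) • y j)) :=
    (hsumlim.inv₀ hSne).smul hveclim
  have hgoal : ((∑ j, Γ i j / c)⁻¹ • ∑ j, (Γ i j / c) • y j)
      = ((∑ j, Γ i j)⁻¹ • ∑ j, Γ i j • y j) := by
    have h1 : (∑ j, (Γ i j / c) • y j) = c⁻¹ • ∑ j, Γ i j • y j := by
      rw [Finset.smul_sum]
      apply Finset.sum_congr rfl
      intro j _
      rw [smul_smul, div_eq_mul_inv, mul_comm]
    rw [h1, hS, smul_smul, div_eq_mul_inv, mul_inv, inv_inv]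
    congr 1
    field_simp
  rw [← hgoal]
  exact hfinal
end
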